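/- Let p, q and s be bounded exponents in Ω with 1/s = 1/p + 1/q pointwise. Then for all f ∈ L^{p(·)}(Ω) and g ∈ L^{q(·)}(Ω) one has fg ∈ L^{s(·)}(Ω) and ‖fg‖_{L^{s(·)}(Ω)} ≤ 2 ‖f‖_{L^{p(·)}(Ω)} ‖g‖_{L^{q(·)}(Ω)}. -/

import Mathlib

open MeasureTheory Filter Topology Metric Set
open scoped ENNReal NNReal

noncomputable section

namespace VarExp

/-- `n`-dimensional Euclidean space. -/
abbrev Eu (n : ℕ) := EuclideanSpace ℝ (Fin n)

variable {n : ℕ}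

/-- The modular of the variable exponent Lebesgue space `L^{p(·)}(Ω)`. -/
def vMod (Ω : Set (Eu n)) (p f : Eu n → ℝ) : ℝ≥0∞ :=
  ∫⁻ x in Ω, ENNReal.ofReal (|f x| ^ p x)

/-- The Luxemburg norm `‖f‖_{L^{p(·)}(Ω)}`. -/
def vNorm (Ω : Set (Eu n)) (p f : Eu n → ℝ) : ℝ :=
  sInf {l : ℝ | 0 < l ∧ vMod Ω p (fun x => f x / l) ≤ 1}

/-- Membership in `L^{p(·)}(Ω)`. -/
def MemVL (Ω : Set (Eu n)) (p f : Eu n → ℝ) : Prop :=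
  AEMeasurable f (volume.restrict Ω) ∧ vMod Ω p f < ⊤

/-- `p` is a bounded exponent on `Ω`: measurable, `1 ≤ p` and `p⁺ = sup p < ∞`. -/
def IsBddExp (Ω : Set (Eu n)) (p : Eu n → ℝ) : Prop :=
  Measurable p ∧ (∀ x ∈ Ω, 1 ≤ p x) ∧ BddAbove (p '' Ω)

/-- `p⁻ = inf p` over `Ω`. -/
def pm (Ω : Set (Eu n)) (p : Eu n → ℝ) : ℝ := sInf (p '' Ω)

/-- `p⁺ = sup p` over `Ω`. -/
def pP (Ω : Set (Eu n)) (p : Eu n → ℝ) : ℝ := sSup (p '' Ω)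

/-- The pointwise conjugate exponent `p' = p/(p-1)`. -/
def conj (p : Eu n → ℝ) : Eu n → ℝ := fun x => p x / (p x - 1)

/-- local log-Hölder continuity on `Ω` -/
def LogHolder (Ω : Set (Eu n)) (p : Eu n → ℝ) : Prop :=
  ∃ C : ℝ, 0 ≤ C ∧ ∀ x ∈ Ω, ∀ y ∈ Ω,
    |p x - p y| ≤ C / Real.log (Real.exp 1 + ‖x - y‖⁻¹)

/-- The class `P^log(Ω)`: log-Hölder continuity together with (if `Ω` is unbounded)
    the log-Hölder decay condition at infinity towards a limit value `pinf`. -/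
def PLog (Ω : Set (Eu n)) (p : Eu n → ℝ) : Prop :=
  LogHolder Ω p ∧
    (Bornology.IsBounded Ω ∨ ∃ pinf C : ℝ, 0 ≤ C ∧
      ∀ x ∈ Ω, |p x - pinf| ≤ C / Real.log (Real.exp 1 + ‖x‖))

/-- Test functions: smooth compactly supported functions with support inside `Ω`. -/
def IsTest (Ω : Set (Eu n)) (φ : Eu n → ℝ) : Prop :=
  ContDiff ℝ (⊤ : ℕ∞) φ ∧ HasCompactSupport φ ∧ tsupport φ ⊆ Ω

/-- classical `i`-th partial derivative -/
def pd (i : Fin n) (φ : Eu n → ℝ) (x : Eu n) : ℝ :=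
  fderiv ℝ φ x (EuclideanSpace.single i (1 : ℝ))

/-- second order classical partial derivative `∂_i ∂_j` -/
def pd2 (i j : Fin n) (φ : Eu n → ℝ) : Eu n → ℝ := pd i (pd j φ)

/-- classical gradient, as a `Fin n`-indexed family -/
def sgrad (φ : Eu n → ℝ) : Eu n → Fin n → ℝ := fun x i => pd i φ x

/-- Euclidean norm of a finite family of reals. -/
def fnorm {ι : Type*} [Fintype ι] (a : ι → ℝ) : ℝ := Real.sqrt (∑ i, (a i) ^ 2)

/-- `L^{p(·)}` norm of a vector valued function -/
def vNormV (Ω : Set (Eu n)) (p : Eu n → ℝ) (v : Eu n → Fin n → ℝ) : ℝ :=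
  vNorm Ω p fun x => fnorm (v x)

/-- `L^{p(·)}` norm of a matrix valued function -/
def vNormM (Ω : Set (Eu n)) (p : Eu n → ℝ) (M : Eu n → Fin n → Fin n → ℝ) : ℝ :=
  vNorm Ω p fun x => fnorm fun q : Fin n × Fin n => M x q.1 q.2

/-- `L^{p(·)}` norm of a third order tensor valued function -/
def vNormT (Ω : Set (Eu n)) (p : Eu n → ℝ)
    (M : Eu n → Fin n → Fin n → Fin n → ℝ) : ℝ :=
  vNorm Ω p fun x => fnorm fun q : Fin n × Fin n × Fin n => M x q.1 q.2.1 q.2.2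

def MemVLV (Ω : Set (Eu n)) (p : Eu n → ℝ) (v : Eu n → Fin n → ℝ) : Prop :=
  ∀ r, MemVL Ω p fun x => v x r

def MemVLM (Ω : Set (Eu n)) (p : Eu n → ℝ) (M : Eu n → Fin n → Fin n → ℝ) : Prop :=
  ∀ r i, MemVL Ω p fun x => M x r i

def MemVLT (Ω : Set (Eu n)) (p : Eu n → ℝ) (M : Eu n → Fin n → Fin n → Fin n → ℝ) : Prop :=
  ∀ r i j, MemVL Ω p fun x => M x r i j

/-- `g` is the `i`-th weak (distributional) partial derivative of `f` on `Ω`. -/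
def IsWeakPD (Ω : Set (Eu n)) (i : Fin n) (f g : Eu n → ℝ) : Prop :=
  ∀ φ, IsTest Ω φ → ∫ x in Ω, f x * pd i φ x = - ∫ x in Ω, g x * φ x

/-- `Df` is the weak gradient of `f` on `Ω`. -/
def IsWeakGrad (Ω : Set (Eu n)) (f : Eu n → ℝ) (Df : Eu n → Fin n → ℝ) : Prop :=
  ∀ i, IsWeakPD Ω i f fun x => Df x i

/-- `D2f` is the weak Hessian of `f` (whose weak gradient is `Df`) on `Ω`. -/
def IsWeakHess (Ω : Set (Eu n)) (Df : Eu n → Fin n → ℝ)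
    (D2f : Eu n → Fin n → Fin n → ℝ) : Prop :=
  ∀ i j, IsWeakPD Ω j (fun x => Df x i) fun x => D2f x i j

/-- weak gradient of a vector field -/
def IsWeakGradV (Ω : Set (Eu n)) (v : Eu n → Fin n → ℝ)
    (Dv : Eu n → Fin n → Fin n → ℝ) : Prop :=
  ∀ r, IsWeakGrad Ω (fun x => v x r) fun x => Dv x r

/-- weak Hessian of a vector field -/
def IsWeakHessV (Ω : Set (Eu n)) (Dv : Eu n → Fin n → Fin n → ℝ)
    (D2v : Eu n → Fin n → Fin n → Fin n → ℝ) : Prop :=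
  ∀ r, IsWeakHess Ω (fun x => Dv x r) fun x => D2v x r

/-- iterated classical partial derivative along a multi-index `γ` -/
def iterPD : {k : ℕ} → (Fin k → Fin n) → (Eu n → ℝ) → (Eu n → ℝ)
  | 0, _, φ => φ
  | (_ + 1), γ, φ => iterPD (fun j => γ j.succ) (pd (γ 0) φ)

/-- `D` is the full `k`-th order weak derivative tensor of `u` on `Ω`. -/
def IsWeakIter (Ω : Set (Eu n)) (k : ℕ) (u : Eu n → ℝ)
    (D : (Fin k → Fin n) → Eu n → ℝ) : Prop :=
  ∀ (γ : Fin k → Fin n) (φ : Eu n → ℝ), IsTest Ω φ →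
    ∫ x in Ω, u x * iterPD γ φ x = (-1 : ℝ) ^ k * ∫ x in Ω, D γ x * φ x

/-- the `W^{1,p(·)}(Ω)` norm of a scalar function with weak gradient `Df` -/
def W1nS (Ω : Set (Eu n)) (p : Eu n → ℝ) (f : Eu n → ℝ) (Df : Eu n → Fin n → ℝ) : ℝ :=
  vNorm Ω p f + vNormV Ω p Df

/-- the `W^{2,p(·)}(Ω)` norm of a scalar function -/
def W2nS (Ω : Set (Eu n)) (p : Eu n → ℝ) (f : Eu n → ℝ) (Df : Eu n → Fin n → ℝ)
    (D2f : Eu n → Fin n → Fin n → ℝ) : ℝ :=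
  vNorm Ω p f + vNormV Ω p Df + vNormM Ω p D2f

/-- the `W^{1,p(·)}(Ω)` norm of a vector field -/
def W1nV (Ω : Set (Eu n)) (p : Eu n → ℝ) (v : Eu n → Fin n → ℝ)
    (Dv : Eu n → Fin n → Fin n → ℝ) : ℝ :=
  vNormV Ω p v + vNormM Ω p Dv

/-- the `W^{2,p(·)}(Ω)` norm of a vector field -/
def W2nV (Ω : Set (Eu n)) (p : Eu n → ℝ) (v : Eu n → Fin n → ℝ)
    (Dv : Eu n → Fin n → Fin n → ℝ) (D2v : Eu n → Fin n → Fin n → Fin n → ℝ) : ℝ :=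
  vNormV Ω p v + vNormM Ω p Dv + vNormT Ω p D2v

/-- membership in `W^{1,p(·)}(Ω)` (scalar), with the weak gradient recorded -/
def MemW1S (Ω : Set (Eu n)) (p : Eu n → ℝ) (f : Eu n → ℝ) (Df : Eu n → Fin n → ℝ) : Prop :=
  MemVL Ω p f ∧ IsWeakGrad Ω f Df ∧ MemVLV Ω p Df

/-- membership in `W^{2,p(·)}(Ω)` (scalar) -/
def MemW2S (Ω : Set (Eu n)) (p : Eu n → ℝ) (f : Eu n → ℝ) (Df : Eu n → Fin n → ℝ)
    (D2f : Eu n → Fin n → Fin n → ℝ) : Prop :=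
  MemW1S Ω p f Df ∧ IsWeakHess Ω Df D2f ∧ MemVLM Ω p D2f

/-- membership in `W^{1,p(·)}(Ω)` (vector) -/
def MemW1V (Ω : Set (Eu n)) (p : Eu n → ℝ) (v : Eu n → Fin n → ℝ)
    (Dv : Eu n → Fin n → Fin n → ℝ) : Prop :=
  MemVLV Ω p v ∧ IsWeakGradV Ω v Dv ∧ MemVLM Ω p Dv

/-- membership in `W^{2,p(·)}(Ω)` (vector) -/
def MemW2V (Ω : Set (Eu n)) (p : Eu n → ℝ) (v : Eu n → Fin n → ℝ)
    (Dv : Eu n → Fin n → Fin n → ℝ) (D2v : Eu n → Fin n → Fin n → Fin n → ℝ) : Prop :=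
  MemW1V Ω p v Dv ∧ IsWeakHessV Ω Dv D2v ∧ MemVLT Ω p D2v

/-- the norm of a (scalar, function-represented) element of `W^{-1,p(·)}(Ω)`,
    i.e. the dual norm with respect to the `W^{1,p'(·)}_0(Ω)` norm. -/
def WmNormS (Ω : Set (Eu n)) (p : Eu n → ℝ) (f : Eu n → ℝ) : ℝ :=
  sSup {s | ∃ φ, IsTest Ω φ ∧ W1nS Ω (conj p) φ (sgrad φ) ≤ 1 ∧
    s = ∫ x in Ω, f x * φ x}

/-- the `(W^{-1,p(·)}(Ω))ⁿ` norm of a function-represented vector field -/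
def WmNormV (Ω : Set (Eu n)) (p : Eu n → ℝ) (f : Eu n → Fin n → ℝ) : ℝ :=
  sSup {s | ∃ φ : Fin n → Eu n → ℝ, (∀ r, IsTest Ω (φ r)) ∧
    vNormV Ω (conj p) (fun x r => φ r x) +
      vNormM Ω (conj p) (fun x r i => pd i (φ r) x) ≤ 1 ∧
    s = ∑ r, ∫ x in Ω, f x r * φ r x}

/-- the `D^{-1,p(·)}(Ω)` norm of a function-represented element
    (dual norm with respect to `‖∇·‖_{p'(·)}`) -/
def DmNormS (Ω : Set (Eu n)) (p : Eu n → ℝ) (f : Eu n → ℝ) : ℝ :=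
  sSup {s | ∃ φ, IsTest Ω φ ∧ vNormV Ω (conj p) (sgrad φ) ≤ 1 ∧
    s = ∫ x in Ω, f x * φ x}

/-- the `(D^{-1,p(·)}(Ω))ⁿ` norm of a function-represented vector field -/
def DmNormV (Ω : Set (Eu n)) (p : Eu n → ℝ) (f : Eu n → Fin n → ℝ) : ℝ :=
  sSup {s | ∃ φ : Fin n → Eu n → ℝ, (∀ r, IsTest Ω (φ r)) ∧
    vNormM Ω (conj p) (fun x r i => pd i (φ r) x) ≤ 1 ∧
    s = ∑ r, ∫ x in Ω, f x r * φ r x}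

/-- A functional on (vector) test functions representing an element of
    `(W^{-1,p(·)}(Ω))ⁿ = ((W_0^{1,p'(·)}(Ω))ⁿ)'`. -/
def MemWmF (Ω : Set (Eu n)) (p : Eu n → ℝ) (T : (Fin n → Eu n → ℝ) → ℝ) : Prop :=
  (∀ (a b : ℝ) (φ ψ : Fin n → Eu n → ℝ), (∀ r, IsTest Ω (φ r)) → (∀ r, IsTest Ω (ψ r)) →
    T (fun r x => a * φ r x + b * ψ r x) = a * T φ + b * T ψ) ∧
  ∃ M : ℝ, 0 ≤ M ∧ ∀ φ : Fin n → Eu n → ℝ, (∀ r, IsTest Ω (φ r)) →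
    |T φ| ≤ M * (vNormV Ω (conj p) (fun x r => φ r x) +
      vNormM Ω (conj p) (fun x r i => pd i (φ r) x))

/-- the `(W^{-1,p(·)}(Ω))ⁿ` norm of such a functional -/
def WmNormF (Ω : Set (Eu n)) (p : Eu n → ℝ) (T : (Fin n → Eu n → ℝ) → ℝ) : ℝ :=
  sSup {s | ∃ φ : Fin n → Eu n → ℝ, (∀ r, IsTest Ω (φ r)) ∧
    vNormV Ω (conj p) (fun x r => φ r x) +
      vNormM Ω (conj p) (fun x r i => pd i (φ r) x) ≤ 1 ∧ s = T φ}

/-- A functional on (scalar) test functions representing an element of `W^{-1,p(·)}(Ω)`. -/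
def MemWmFS (Ω : Set (Eu n)) (p : Eu n → ℝ) (T : (Eu n → ℝ) → ℝ) : Prop :=
  (∀ (a b : ℝ) (φ ψ : Eu n → ℝ), IsTest Ω φ → IsTest Ω ψ →
    T (fun x => a * φ x + b * ψ x) = a * T φ + b * T ψ) ∧
  ∃ M : ℝ, 0 ≤ M ∧ ∀ φ, IsTest Ω φ → |T φ| ≤ M * W1nS Ω (conj p) φ (sgrad φ)

def WmNormFS (Ω : Set (Eu n)) (p : Eu n → ℝ) (T : (Eu n → ℝ) → ℝ) : ℝ :=
  sSup {s | ∃ φ, IsTest Ω φ ∧ W1nS Ω (conj p) φ (sgrad φ) ≤ 1 ∧ s = T φ}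

/-- A functional on vector test functions representing an element of
    `(D^{-1,p(·)}(Ω))ⁿ = ((D_0^{1,p'(·)}(Ω))ⁿ)'`. -/
def MemDmF (Ω : Set (Eu n)) (p : Eu n → ℝ) (T : (Fin n → Eu n → ℝ) → ℝ) : Prop :=
  (∀ (a b : ℝ) (φ ψ : Fin n → Eu n → ℝ), (∀ r, IsTest Ω (φ r)) → (∀ r, IsTest Ω (ψ r)) →
    T (fun r x => a * φ r x + b * ψ r x) = a * T φ + b * T ψ) ∧
  ∃ M : ℝ, 0 ≤ M ∧ ∀ φ : Fin n → Eu n → ℝ, (∀ r, IsTest Ω (φ r)) →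
    |T φ| ≤ M * vNormM Ω (conj p) (fun x r i => pd i (φ r) x)

def DmNormF (Ω : Set (Eu n)) (p : Eu n → ℝ) (T : (Fin n → Eu n → ℝ) → ℝ) : ℝ :=
  sSup {s | ∃ φ : Fin n → Eu n → ℝ, (∀ r, IsTest Ω (φ r)) ∧
    vNormM Ω (conj p) (fun x r i => pd i (φ r) x) ≤ 1 ∧ s = T φ}

/-- `u ∈ W_0^{1,p(·)}(Ω)`-style vanishing of the boundary values (zero trace):
    `u` (with weak gradient `Du`) can be approximated by test functions in the
    `W^{1,p(·)}(Ω)` norm. -/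
def ZeroTrace (Ω : Set (Eu n)) (p : Eu n → ℝ) (u : Eu n → ℝ) (Du : Eu n → Fin n → ℝ) : Prop :=
  ∀ ε : ℝ, 0 < ε → ∃ φ, IsTest Ω φ ∧
    vNorm Ω p (fun x => u x - φ x) + vNormV Ω p (fun x i => Du x i - pd i φ x) < ε

def ZeroTraceV (Ω : Set (Eu n)) (p : Eu n → ℝ) (v : Eu n → Fin n → ℝ)
    (Dv : Eu n → Fin n → Fin n → ℝ) : Prop :=
  ∀ r, ZeroTrace Ω p (fun x => v x r) fun x => Dv x r

/-- the norm of the trace space `tr(W^{1,p(·)}(Ω))` of the boundary datum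
    realized by `u₀` -/
def trNormW1S (Ω : Set (Eu n)) (p : Eu n → ℝ) (u₀ : Eu n → ℝ)
    (Du₀ : Eu n → Fin n → ℝ) : ℝ :=
  sInf {s | ∃ u Du, MemW1S Ω p u Du ∧
    ZeroTrace Ω p (fun x => u x - u₀ x) (fun x i => Du x i - Du₀ x i) ∧
    s = W1nS Ω p u Du}

def trNormW2S (Ω : Set (Eu n)) (p : Eu n → ℝ) (u₀ : Eu n → ℝ)
    (Du₀ : Eu n → Fin n → ℝ) (D2u₀ : Eu n → Fin n → Fin n → ℝ) : ℝ :=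
  sInf {s | ∃ u Du D2u, MemW2S Ω p u Du D2u ∧
    ZeroTrace Ω p (fun x => u x - u₀ x) (fun x i => Du x i - Du₀ x i) ∧
    s = W2nS Ω p u Du D2u}

def trNormW1V (Ω : Set (Eu n)) (p : Eu n → ℝ) (u₀ : Eu n → Fin n → ℝ)
    (Du₀ : Eu n → Fin n → Fin n → ℝ) : ℝ :=
  sInf {s | ∃ u Du, MemW1V Ω p u Du ∧
    ZeroTraceV Ω p (fun x r => u x r - u₀ x r) (fun x r i => Du x r i - Du₀ x r i) ∧
    s = W1nV Ω p u Du}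

def trNormW2V (Ω : Set (Eu n)) (p : Eu n → ℝ) (u₀ : Eu n → Fin n → ℝ)
    (Du₀ : Eu n → Fin n → Fin n → ℝ) (D2u₀ : Eu n → Fin n → Fin n → Fin n → ℝ) : ℝ :=
  sInf {s | ∃ u Du D2u, MemW2V Ω p u Du D2u ∧
    ZeroTraceV Ω p (fun x r => u x r - u₀ x r) (fun x r i => Du x r i - Du₀ x r i) ∧
    s = W2nV Ω p u Du D2u}

/-- the last coordinate `x_n` of a point of `ℝⁿ` -/
def lastc (x : Eu n) : ℝ := if h : 0 < n then x ⟨n - 1, Nat.sub_lt h Nat.one_pos⟩ else 0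

/-- the open upper half-space `ℝⁿ_>` -/
def upper (n : ℕ) : Set (Eu n) := {x | 0 < lastc x}

/-- the hyperplane `Σ = ∂ℝⁿ_>` -/
def Sig (n : ℕ) : Set (Eu n) := {x | lastc x = 0}

/-- the index of the last coordinate -/
def idxn (n : ℕ) (h : 0 < n) : Fin n := ⟨n - 1, Nat.sub_lt h Nat.one_pos⟩

/-- zero boundary values on `Σ` of a function on the half space, expressed through
    the Gauß–Green formula: `∫ (u ∂_i φ + ∂_i u φ) = 0` for all smooth compactly
    supported `φ` (on all of `ℝⁿ`) and all `i`. -/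
def ZeroTraceHalf (u : Eu n → ℝ) (Du : Eu n → Fin n → ℝ) : Prop :=
  ∀ φ : Eu n → ℝ, ContDiff ℝ (⊤ : ℕ∞) φ → HasCompactSupport φ → ∀ i,
    ∫ x in upper n, (u x * pd i φ x + Du x i * φ x) = 0

def ZeroTraceHalfV (v : Eu n → Fin n → ℝ) (Dv : Eu n → Fin n → Fin n → ℝ) : Prop :=
  ∀ r, ZeroTraceHalf (fun x => v x r) fun x => Dv x r

/-- a domain: a nonempty connected open set -/
def IsDomain (Ω : Set (Eu n)) : Prop := IsOpen Ω ∧ IsConnected Ω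

/-- the point `(x', t) ∈ ℝⁿ` built from `x' ∈ ℝ^{n-1}` and a last coordinate `t` -/
def graphPt (x' : Eu (n - 1)) (t : ℝ) : Eu n :=
  (EuclideanSpace.equiv (Fin n) ℝ).symm fun i => if h : (i : ℕ) < n - 1 then x' ⟨i, h⟩ else t

/-- the graph piece `{(x', a(x')) : |x'| < α}` -/
def graphSet (a : Eu (n - 1) → ℝ) (α : ℝ) : Set (Eu n) :=
  {z | ∃ x', ‖x'‖ < α ∧ z = graphPt x' (a x')}

/-- the piece `{(x', t) : |x'| < α, a(x') < t < a(x') + β}` above the graph -/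
def aboveSet (a : Eu (n - 1) → ℝ) (α β : ℝ) : Set (Eu n) :=
  {z | ∃ x' t, ‖x'‖ < α ∧ a x' < t ∧ t < a x' + β ∧ z = graphPt x' t}

/-- the piece `{(x', t) : |x'| < α, a(x') - β < t < a(x')}` below the graph -/
def belowSet (a : Eu (n - 1) → ℝ) (α β : ℝ) : Set (Eu n) :=
  {z | ∃ x' t, ‖x'‖ < α ∧ a x' - β < t ∧ t < a x' ∧ z = graphPt x' t}

/-- `C^{1,1}` boundary chart data of `Ω` at the boundary point `xb`. -/
structure C11Chart (Ω : Set (Eu n)) (xb : Eu n) where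
  G : Eu n ≃ᵃⁱ[ℝ] Eu n
  a : Eu (n - 1) → ℝ
  α : ℝ
  β : ℝ
  L : ℝ≥0
  hα : 0 < α
  hβ : 0 < β
  hG : G 0 = xb
  ha0 : a 0 = 0
  hdiff : ContDiffOn ℝ 1 a (ball 0 α)
  hda0 : fderivWithin ℝ a (ball 0 α) 0 = 0
  hlip : LipschitzOnWith L (fderivWithin ℝ a (ball 0 α)) (ball 0 α)
  hgraph : G '' graphSet a α ⊆ frontier Ω
  habove : G '' aboveSet a α β ⊆ Ω
  hbelow : G '' belowSet a α β ⊆ (closure Ω)ᶜ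

/-- `Ω` has a `C^{1,1}` boundary. -/
def HasC11Boundary (Ω : Set (Eu n)) : Prop := ∀ xb ∈ frontier Ω, Nonempty (C11Chart Ω xb)

/-- Lipschitz boundary chart data of `Ω` at the boundary point `xb`. -/
structure LipChart (Ω : Set (Eu n)) (xb : Eu n) where
  G : Eu n ≃ᵃⁱ[ℝ] Eu n
  a : Eu (n - 1) → ℝ
  α : ℝ
  β : ℝ
  L : ℝ≥0
  hα : 0 < α
  hβ : 0 < β
  hG : G 0 = xb
  ha0 : a 0 = 0
  hlip : LipschitzOnWith L a (ball 0 α)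
  hgraph : G '' graphSet a α ⊆ frontier Ω
  habove : G '' aboveSet a α β ⊆ Ω
  hbelow : G '' belowSet a α β ⊆ (closure Ω)ᶜ

/-- `Ω` has a Lipschitz continuous boundary. -/
def HasLipschitzBoundary (Ω : Set (Eu n)) : Prop :=
  ∀ xb ∈ frontier Ω, Nonempty (LipChart Ω xb)

/-- fundamental solution kernel `V^{rl}` of the Stokes system -/
def Vker (n : ℕ) (r l : Fin n) (x : Eu n) : ℝ :=
  (1 / ((n : ℝ) - 2)) * (if r = l then 1 else 0) / ‖x‖ ^ (n - 2) + x r * x l / ‖x‖ ^ n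

/-- fundamental solution kernel `Q^l` of the Stokes system -/
def Qker (n : ℕ) (l : Fin n) (x : Eu n) : ℝ := x l / ‖x‖ ^ n

/-- volume `|B₁|` of the unit ball -/
def ballVol (n : ℕ) : ℝ := (volume (ball (0 : Eu n) 1)).toReal

/-- surface area `|∂B₁|` of the unit sphere -/
def sphVol (n : ℕ) : ℝ := (μH[(n : ℝ) - 1] (sphere (0 : Eu n) 1)).toReal

/-- the Newton potential -/
def Nker (n : ℕ) (x : Eu n) : ℝ := (1 / (((n : ℝ) - 2) * sphVol n)) / ‖x‖ ^ (n - 2)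

/- The weighted AM–GM inequality gives, pointwise, `(ab)^s ≤ a^p + b^q` whenever
`1/s = 1/p + 1/q`. Integrating, `ρ_s(fg/(AB)) ≤ ρ_p(f/A) + ρ_q(g/B) ≤ 2` for admissible Luxemburg
scales `A` of `f` and `B` of `g`; since `s ≥ 1`, halving a function at least halves its modular, so
`2AB` is an admissible scale of `fg`. Taking infima over `A` and `B` gives the norm bound. -/

theorem _root_.Real.mul_rpow_le_rpow_add_rpow {a b P Q S : ℝ} (ha : 0 ≤ a) (hb : 0 ≤ b)
    (hP : 0 < P) (hQ : 0 < Q) (h : 1 / S = 1 / P + 1 / Q) :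
    (a * b) ^ S ≤ a ^ P + b ^ Q := by
  have hS : 0 < S := one_div_pos.mp (h ▸ by positivity)
  have hweights : S / P + S / Q = 1 := by
    rw [div_eq_mul_one_div S P, div_eq_mul_one_div S Q, ← mul_add, ← h, mul_one_div_cancel hS.ne']
  have hSP : S / P ≤ 1 := by linarith [div_nonneg hS.le hQ.le]
  have hSQ : S / Q ≤ 1 := by linarith [div_nonneg hS.le hP.le]
  have hpow : ∀ {c R : ℝ}, 0 ≤ c → 0 < R → (c ^ R) ^ (S / R) = c ^ S := fun hc hR => by
    rw [← Real.rpow_mul hc, mul_div_cancel₀ _ hR.ne']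
  calc (a * b) ^ S = (a ^ P) ^ (S / P) * (b ^ Q) ^ (S / Q) := by
        rw [hpow ha hP, hpow hb hQ, Real.mul_rpow ha hb]
    _ ≤ S / P * a ^ P + S / Q * b ^ Q :=
        Real.geom_mean_le_arith_mean2_weighted (by positivity) (by positivity) (by positivity)
          (by positivity) hweights
    _ ≤ a ^ P + b ^ Q := by
        gcongr
        · exact mul_le_of_le_one_left (by positivity) hSP
        · exact mul_le_of_le_one_left (by positivity) hSQ

theorem _root_.Real.le_csInf_mul_csInf {S T : Set ℝ} (hS : S.Nonempty) (hT : T.Nonempty)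
    (hSb : BddBelow S) (hTb : BddBelow T) {c : ℝ} (h : ∀ a ∈ S, ∀ b ∈ T, c ≤ a * b) :
    c ≤ sInf S * sInf T := by
  have hinf : (sInf S, sInf T) ∈ closure (S ×ˢ T) := by
    rw [closure_prod_eq]
    exact ⟨csInf_mem_closure hS hSb, csInf_mem_closure hT hTb⟩
  exact closure_minimal (fun ab hab => h ab.1 hab.1 ab.2 hab.2)
    (isClosed_le continuous_const (continuous_fst.mul continuous_snd)) hinf

variable {Ω : Set (Eu n)} {p q s f g : Eu n → ℝ}

def luxemburgSet (Ω : Set (Eu n)) (p f : Eu n → ℝ) : Set ℝ :=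
  {l : ℝ | 0 < l ∧ vMod Ω p (fun x => f x / l) ≤ 1}

theorem bddBelow_luxemburgSet : BddBelow (luxemburgSet Ω p f) := ⟨0, fun _ hl => hl.1.le⟩

theorem vNorm_le_of_mem_luxemburgSet {l : ℝ} (hl : l ∈ luxemburgSet Ω p f) : vNorm Ω p f ≤ l :=
  csInf_le bddBelow_luxemburgSet hl

theorem aemeasurable_vMod_integrand (hf : AEMeasurable f (volume.restrict Ω)) (hp : Measurable p) :
    AEMeasurable (fun x => ENNReal.ofReal (|f x| ^ p x)) (volume.restrict Ω) :=
  ((measurable_abs.comp_aemeasurable hf).pow hp.aemeasurable).ennreal_ofReal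

theorem vMod_div_le (hΩ : MeasurableSet Ω) (hp : ∀ x ∈ Ω, 1 ≤ p x) {l : ℝ} (hl : 1 ≤ l) :
    vMod Ω p (fun x => f x / l) ≤ vMod Ω p f / ENNReal.ofReal l := by
  have hl0 : 0 < l := zero_lt_one.trans_le hl
  rw [vMod, vMod, ENNReal.div_eq_inv_mul,
    ← lintegral_const_mul' _ _ (ENNReal.inv_ne_top.mpr (ENNReal.ofReal_pos.mpr hl0).ne')]
  refine lintegral_mono_ae ?_
  filter_upwards [ae_restrict_of_forall_mem hΩ hp] with x hx
  have hl_le : l ≤ l ^ p x := Real.self_le_rpow_of_one_le hl hx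
  calc ENNReal.ofReal (|f x / l| ^ p x) = ENNReal.ofReal (|f x| ^ p x / l ^ p x) := by
        rw [abs_div, abs_of_pos hl0, Real.div_rpow (abs_nonneg _) hl0.le]
    _ ≤ ENNReal.ofReal (|f x| ^ p x / l) :=
        ENNReal.ofReal_le_ofReal (div_le_div_of_nonneg_left (by positivity) hl0 hl_le)
    _ = (ENNReal.ofReal l)⁻¹ * ENNReal.ofReal (|f x| ^ p x) := by
        rw [ENNReal.ofReal_div_of_pos hl0, ENNReal.div_eq_inv_mul]

theorem luxemburgSet_nonempty (hΩ : MeasurableSet Ω) (hp : ∀ x ∈ Ω, 1 ≤ p x)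
    (hf : vMod Ω p f < ⊤) : (luxemburgSet Ω p f).Nonempty := by
  set l : ℝ := (vMod Ω p f).toReal + 1
  have hl : 1 ≤ l := le_add_of_nonneg_left ENNReal.toReal_nonneg
  refine ⟨l, zero_lt_one.trans_le hl, (vMod_div_le hΩ hp hl).trans ?_⟩
  refine ENNReal.div_le_of_le_mul ?_
  rw [one_mul, ← ENNReal.ofReal_toReal hf.ne]
  exact ENNReal.ofReal_le_ofReal (by linarith)

theorem vMod_mul_le_add (hΩ : MeasurableSet Ω) (hp : Measurable p) (hp0 : ∀ x ∈ Ω, 0 < p x)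
    (hq0 : ∀ x ∈ Ω, 0 < q x) (hpqs : ∀ x ∈ Ω, 1 / s x = 1 / p x + 1 / q x)
    (hf : AEMeasurable f (volume.restrict Ω)) :
    vMod Ω s (fun x => f x * g x) ≤ vMod Ω p f + vMod Ω q g := by
  rw [vMod, vMod, vMod, ← lintegral_add_left' (aemeasurable_vMod_integrand hf hp)]
  refine lintegral_mono_ae ?_
  filter_upwards [ae_restrict_of_forall_mem hΩ hp0, ae_restrict_of_forall_mem hΩ hq0,
    ae_restrict_of_forall_mem hΩ hpqs] with x hpx hqx hx
  rw [abs_mul]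
  exact (ENNReal.ofReal_le_ofReal (Real.mul_rpow_le_rpow_add_rpow (abs_nonneg _) (abs_nonneg _)
    hpx hqx hx)).trans ENNReal.ofReal_add_le

theorem mul_mem_luxemburgSet (hΩ : MeasurableSet Ω) (hp : Measurable p)
    (hp0 : ∀ x ∈ Ω, 0 < p x) (hq0 : ∀ x ∈ Ω, 0 < q x) (hs1 : ∀ x ∈ Ω, 1 ≤ s x)
    (hpqs : ∀ x ∈ Ω, 1 / s x = 1 / p x + 1 / q x) (hf : AEMeasurable f (volume.restrict Ω))
    {A B : ℝ} (hA : A ∈ luxemburgSet Ω p f) (hB : B ∈ luxemburgSet Ω q g) :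
    2 * A * B ∈ luxemburgSet Ω s (fun x => f x * g x) := by
  obtain ⟨hA0, hAf⟩ := hA
  obtain ⟨hB0, hBg⟩ := hB
  refine ⟨by positivity, ?_⟩
  have hsplit : (fun x => f x * g x / (2 * A * B)) = fun x => f x / A * (g x / B) / 2 := by
    funext x
    field_simp
  calc vMod Ω s (fun x => f x * g x / (2 * A * B))
      ≤ vMod Ω s (fun x => f x / A * (g x / B)) / ENNReal.ofReal 2 := by
        rw [hsplit]
        exact vMod_div_le hΩ hs1 one_le_two
    _ ≤ (1 + 1) / 2 := by
        rw [ENNReal.ofReal_ofNat]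
        gcongr
        exact (vMod_mul_le_add hΩ hp hp0 hq0 hpqs (hf.div_const A)).trans (add_le_add hAf hBg)
    _ = 1 := by rw [one_add_one_eq_two, ENNReal.div_self two_ne_zero ENNReal.ofNat_ne_top]

theorem holder_vLp
    {n : ℕ} (Ω : Set (Eu n)) (hΩ : IsDomain Ω) (p q s : Eu n → ℝ)
    (hp : IsBddExp Ω p) (hq : IsBddExp Ω q) (hs : IsBddExp Ω s)
    (hpqs : ∀ x ∈ Ω, 1 / s x = 1 / p x + 1 / q x) :
    ∀ f g : Eu n → ℝ, MemVL Ω p f → MemVL Ω q g →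
      MemVL Ω s (fun x => f x * g x) ∧
      vNorm Ω s (fun x => f x * g x) ≤ 2 * vNorm Ω p f * vNorm Ω q g := by
  obtain ⟨hpm, hp1, -⟩ := hp
  obtain ⟨-, hq1, -⟩ := hq
  obtain ⟨-, hs1, -⟩ := hs
  have hΩm : MeasurableSet Ω := hΩ.1.measurableSet
  have hp0 : ∀ x ∈ Ω, 0 < p x := fun x hx => zero_lt_one.trans_le (hp1 x hx)
  have hq0 : ∀ x ∈ Ω, 0 < q x := fun x hx => zero_lt_one.trans_le (hq1 x hx)
  rintro f g ⟨hfm, hf⟩ ⟨hgm, hg⟩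
  refine ⟨⟨hfm.mul hgm, (vMod_mul_le_add hΩm hpm hp0 hq0 hpqs hfm).trans_lt
    (ENNReal.add_lt_top.mpr ⟨hf, hg⟩)⟩, ?_⟩
  have hprod : vNorm Ω s (fun x => f x * g x) / 2 ≤ vNorm Ω p f * vNorm Ω q g :=
    Real.le_csInf_mul_csInf (luxemburgSet_nonempty hΩm hp1 hf) (luxemburgSet_nonempty hΩm hq1 hg)
      bddBelow_luxemburgSet bddBelow_luxemburgSet fun A hA B hB => by
        have := vNorm_le_of_mem_luxemburgSet
          (mul_mem_luxemburgSet hΩm hpm hp0 hq0 hs1 hpqs hfm hA hB)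
        linarith
  linarith

end VarExp
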